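/- If α > 0 and 1/2 < p ≤ 1, then the average wrong-action probability g is strictly decreasing on (−∞, 5/2] and strictly increasing on [5/2, ∞). -/

import Mathlib

/-!
Since `g(φ) = 1/2 + (p - 1/2)(σ(α(2 - φ)) - σ(α(3 - φ)))`, its derivative is
`(p - 1/2) α (σ'(α(3 - φ)) - σ'(α(2 - φ)))`. The derivative `σ'(z) = 1/(2 + 2 cosh z)` is
even and strictly decreasing in `|z|`, so the sign of `g'(φ)` is decided by which of the
states 2 and 3 is closer to `φ`: negative for `φ < 5/2`, positive for `φ > 5/2`.
-/

/-- The logistic sigmoid σ(z) = 1/(1 + e^{−z}). -/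
noncomputable def sig (z : ℝ) : ℝ := 1 / (1 + Real.exp (-z))

/-- μ_φ(s) = σ(α(s − φ)), the soft decision node with steepness α and threshold φ. -/
noncomputable def mu (α φ s : ℝ) : ℝ := sig (α * (s - φ))

/-- Probability that the soft decision-tree policy with exploitation parameter p
selects action a2 in state s: π_φ(s, a2) = μ_φ(s)·p + (1 − μ_φ(s))·(1 − p).
(The probability of a1 is the complement.) -/
noncomputable def piA2 (α p φ s : ℝ) : ℝ := mu α φ s * p + (1 - mu α φ s) * (1 - p)

/-- Average wrong-action probability g(φ) = ½(π_φ(2, a2) + π_φ(3, a1)), where the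
wrong actions are a2 in state 2 and a1 in state 3, and π_φ(3, a1) = 1 − π_φ(3, a2). -/
noncomputable def g (α p φ : ℝ) : ℝ := (1 / 2) * (piA2 α p φ 2 + (1 - piA2 α p φ 3))

open Real

/-- `σ' = σ (1 - σ)`, written so that its evenness is visible. -/
noncomputable def sigDeriv (z : ℝ) : ℝ := (2 + 2 * cosh z)⁻¹

theorem hasDerivAt_sig (z : ℝ) : HasDerivAt sig (sigDeriv z) z := by
  have hden : 1 + exp (-z) ≠ 0 := by positivity
  have hsig : sig = fun z => (1 + exp (-z))⁻¹ := funext fun w => one_div _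
  rw [hsig]
  refine ((((hasDerivAt_neg z).exp).const_add 1).inv hden).congr_deriv ?_
  rw [sigDeriv, cosh_eq, exp_neg]
  field_simp
  ring

theorem sigDeriv_lt_sigDeriv {u v : ℝ} (h : u ^ 2 < v ^ 2) : sigDeriv v < sigDeriv u := by
  have hcosh : cosh u < cosh v := cosh_lt_cosh.2 (sq_lt_sq.1 h)
  exact inv_strictAnti₀ (by positivity) (by linarith)

theorem g_eq (α p φ : ℝ) :
    g α p φ = 1 / 2 + (p - 1 / 2) * (sig (α * (2 - φ)) - sig (α * (3 - φ))) := by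
  simp only [g, piA2, mu]
  ring

theorem hasDerivAt_g (α p φ : ℝ) :
    HasDerivAt (g α p)
      ((p - 1 / 2) * α * (sigDeriv (α * (3 - φ)) - sigDeriv (α * (2 - φ)))) φ := by
  have hnode (s : ℝ) : HasDerivAt (fun φ => sig (α * (s - φ))) (sigDeriv (α * (s - φ)) * -α) φ :=
    (hasDerivAt_sig _).comp φ (by simpa using ((hasDerivAt_id φ).const_sub s).const_mul α)
  rw [show g α p = _ from funext (g_eq α p)]
  refine ((((hnode 2).sub (hnode 3)).const_mul (p - 1 / 2)).const_add (1 / 2)).congr_deriv ?_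
  ring

theorem deriv_g_neg {α p φ : ℝ} (hα : 0 < α) (hp : 1 / 2 < p) (hφ : φ < 5 / 2) :
    deriv (g α p) φ < 0 := by
  have hsq : (α * (2 - φ)) ^ 2 < (α * (3 - φ)) ^ 2 := by nlinarith [mul_pos hα hα]
  rw [(hasDerivAt_g α p φ).deriv]
  exact mul_neg_of_pos_of_neg (by nlinarith) (by linarith [sigDeriv_lt_sigDeriv hsq])

theorem deriv_g_pos {α p φ : ℝ} (hα : 0 < α) (hp : 1 / 2 < p) (hφ : 5 / 2 < φ) :
    0 < deriv (g α p) φ := by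
  have hsq : (α * (3 - φ)) ^ 2 < (α * (2 - φ)) ^ 2 := by nlinarith [mul_pos hα hα]
  rw [(hasDerivAt_g α p φ).deriv]
  exact mul_pos (by nlinarith) (by linarith [sigDeriv_lt_sigDeriv hsq])

theorem stmt10_general (α p : ℝ) (hα : 0 < α) (hp1 : 1 / 2 < p) :
    StrictAntiOn (g α p) (Set.Iic (5 / 2 : ℝ)) ∧
    StrictMonoOn (g α p) (Set.Ici (5 / 2 : ℝ)) := by
  have hcont : Continuous (g α p) :=
    continuous_iff_continuousAt.2 fun φ => (hasDerivAt_g α p φ).continuousAt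
  constructor
  · refine strictAntiOn_of_deriv_neg (convex_Iic _) hcont.continuousOn fun φ hφ => ?_
    rw [interior_Iic] at hφ
    exact deriv_g_neg hα hp1 hφ
  · refine strictMonoOn_of_deriv_pos (convex_Ici _) hcont.continuousOn fun φ hφ => ?_
    rw [interior_Ici] at hφ
    exact deriv_g_pos hα hp1 hφ

/-- if α > 0 and 1/2 < p ≤ 1, then the average wrong-action
probability g is strictly decreasing on (−∞, 5/2] and strictly increasing on
[5/2, ∞). -/
theorem stmt10 (α p : ℝ) (hα : 0 < α) (hp1 : 1 / 2 < p) (hp2 : p ≤ 1) :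
    StrictAntiOn (g α p) (Set.Iic (5 / 2 : ℝ)) ∧
    StrictMonoOn (g α p) (Set.Ici (5 / 2 : ℝ)) :=
  stmt10_general α p hα hp1
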